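/- arXiv:math/0307139 — 7 statements merged into one kernel-verified Lean document; each statement's English description precedes it below -/
import Mathlib

section
/- Let S, S₁, S₂ be unital associative ℂ-algebras with S finite-dimensional over ℂ and semisimple, together with ℂ-algebra homomorphisms ι₁ : S → S₁ and ι₂ : S → S₂. Assume S₁ and S₂ are formally smooth, i.e. for every unital associative ℂ-algebra T and every nilpotent two-sided ideal I ⊆ T, every ℂ-algebra homomorphism from Sᵢ to T/I lifts through the quotient map T → T/I to a ℂ-algebra homomorphism Sᵢ → T. Let A be a unital associative ℂ-algebra equipped with ℂ-algebra homomorphisms j₁ : S₁ → A and j₂ : S₂ → A satisfying j₁ ∘ ι₁ = j₂ ∘ ι₂, and which is an amalgamated coproduct S₁ ∗_S S₂, meaning: for every unital associative ℂ-algebra C and all ℂ-algebra homomorphisms f₁ : S₁ → C, f₂ : S₂ → C with f₁ ∘ ι₁ = f₂ ∘ ι₂, there is a unique ℂ-algebra homomorphism g : A → C with g ∘ j₁ = f₁ and g ∘ j₂ = f₂. Then A is formally smooth: for every unital associative ℂ-algebra T, every nilpotent two-sided ideal I ⊆ T with quotient map π : T → T/I, and every ℂ-algebra homomorphism φ : A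 → T/I, there exists a ℂ-algebra homomorphism φ̃ : A → T with π ∘ φ̃ = φ. -/
/-- The kernel of `π` (a two-sided ideal) is nilpotent: there is `k ≥ 1` such that
every product of `k` elements of the kernel is zero. -/
def NilpotentKernel {T R : Type*} [Ring T] [Ring R] (π : T →+* R) : Prop :=
  ∃ k : ℕ, 1 ≤ k ∧ ∀ l : List T, l.length = k → (∀ x ∈ l, π x = 0) → l.prod = 0

/-- A unital associative `ℂ`-algebra `A` is formally smooth if every `ℂ`-algebra map
from `A` to a quotient `T/I` of a `ℂ`-algebra `T` by a nilpotent two-sided ideal `I`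
(encoded as a surjective `ℂ`-algebra map `π : T → R` with nilpotent kernel) lifts to `T`. -/
def FormSmooth (A : Type*) [Ring A] [Algebra ℂ A] : Prop :=
  ∀ (T : Type) [Ring T] [Algebra ℂ T] (R : Type) [Ring R] [Algebra ℂ R]
    (π : T →ₐ[ℂ] R), Function.Surjective π → NilpotentKernel (π : T →+* R) →
    ∀ φ : A →ₐ[ℂ] R, ∃ ψ : A →ₐ[ℂ] T, π.comp ψ = φ

/-!
The trace form `(x, y) ↦ tr (x y ·)` of a finite-dimensional semisimple algebra `S` in
characteristic zero is nondegenerate: its radical is a left ideal `S p` with `p` idempotent, and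
`tr (p ·) = rank (p ·)` vanishes, so `p = 0`. For a basis `bᵢ` with trace-dual basis `dᵢ`, the
element `e = ∑ bᵢ ⊗ dᵢ` is then a separability idempotent of `S`.

Given `φ : A → T/I`, lift `φ ∘ j₁` and `φ ∘ j₂` to `ψ₁ : S₁ → T` and `ψ₂ : S₂ → T`. The maps
`f = ψ₁ ∘ ι₁` and `g = ψ₂ ∘ ι₂` agree modulo `I`, and `u = ∑ f(bᵢ) g(dᵢ)` satisfies
`f(s) u = u g(s)` and `u ≡ 1 mod I`; as `I` is nilpotent, `u` is a unit. Conjugating `ψ₂` by `u`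
makes the two lifts agree on `S`, so the universal property glues them to a lift of `φ`.
-/

open TensorProduct

section TraceForm

variable (K S : Type*) [CommRing K] [Ring S] [Algebra K S]

noncomputable def regularTraceForm : LinearMap.BilinForm K S :=
  (LinearMap.mul K S).compr₂ ((LinearMap.trace K S).comp (Algebra.lmul K S).toLinearMap)

variable {K S}

theorem regularTraceForm_apply (x y : S) :
    regularTraceForm K S x y = LinearMap.trace K S (Algebra.lmul K S (x * y)) := rfl

theorem regularTraceForm_isSymm : (regularTraceForm K S).IsSymm :=
  ⟨fun x y => by simp only [regularTraceForm_apply, map_mul, LinearMap.trace_mul_comm]⟩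

theorem regularTraceForm_mul_left (x a y : S) :
    regularTraceForm K S (x * a) y = regularTraceForm K S x (a * y) := by
  simp only [regularTraceForm_apply, mul_assoc]

theorem regularTraceForm_one_left_eq_sum_repr {ι : Type*} [Fintype ι] (b : Module.Basis ι K S)
    (y : S) :
    regularTraceForm K S 1 y = ∑ i, b.repr (y * b i) i := by
  classical
  rw [regularTraceForm_apply, one_mul, LinearMap.trace_eq_matrix_trace K b, Matrix.trace]
  simp [LinearMap.toMatrix_apply]

theorem regularTraceForm_nondegenerate (K S : Type*) [Field K] [CharZero K] [Ring S]
    [Algebra K S] [FiniteDimensional K S] [IsSemisimpleRing S] :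
    (regularTraceForm K S).Nondegenerate := by
  suffices h : (regularTraceForm K S).SeparatingLeft from
    ⟨h, fun y hy => h y fun x => (regularTraceForm_isSymm.eq y x).trans (hy x)⟩
  let J : Ideal S :=
    { carrier := {x | ∀ y, regularTraceForm K S x y = 0}
      add_mem' := fun hx hy z => by simp [hx z, hy z]
      zero_mem' := fun z => by simp
      smul_mem' := fun s x hx z => by
        rw [smul_eq_mul, regularTraceForm_isSymm.eq, ← regularTraceForm_mul_left,
          regularTraceForm_isSymm.eq]
        exact hx _ }
  obtain ⟨p, hp, hJ⟩ := IsSemisimpleRing.ideal_eq_span_idempotent J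
  have hpJ : p ∈ J := hJ ▸ Ideal.subset_span rfl
  have hp0 : p = 0 := by
    have hlmul : Algebra.lmul K S p = 0 :=
      LinearMap.IsIdempotentElem.eq_zero_of_trace_eq_zero (hp.map (Algebra.lmul K S))
        (by simpa [regularTraceForm_apply] using hpJ 1)
    simpa using LinearMap.congr_fun hlmul 1
  intro x hx
  have hxJ : x ∈ J := hx
  rw [hJ, Ideal.mem_span_singleton'] at hxJ
  obtain ⟨a, rfl⟩ := hxJ
  rw [hp0, mul_zero]

end TraceForm

section Casimir

variable {K S : Type*} [Field K] [Ring S] [Algebra K S] {ι : Type*} [Fintype ι] [DecidableEq ι]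
  {B : LinearMap.BilinForm K S} (hB : B.Nondegenerate) (b : Module.Basis ι K S)

theorem LinearMap.BilinForm.repr_apply_eq_apply_dualBasis (hsymm : B.IsSymm) (x : S) (i : ι) :
    b.repr x i = B x (B.dualBasis hB b i) := by
  conv_lhs => rw [← B.dualBasis_dualBasis hB hsymm b]
  exact B.dualBasis_repr_apply hB _ x i

variable (B) in
noncomputable def casimirElement : S ⊗[K] S := ∑ i, b i ⊗ₜ[K] B.dualBasis hB b i

theorem tmul_one_mul_casimirElement (hsymm : B.IsSymm)
    (hassoc : ∀ x a y, B (x * a) y = B x (a * y)) (s : S) :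
    (s ⊗ₜ[K] 1) * casimirElement B hB b = casimirElement B hB b * (1 ⊗ₜ[K] s) := by
  rw [casimirElement]
  set d := B.dualBasis hB b
  have expand_b (x : S) : x = ∑ j, B x (d j) • b j := by
    simpa [B.repr_apply_eq_apply_dualBasis hB b hsymm] using (b.sum_repr x).symm
  have expand_d (x : S) : x = ∑ j, B x (b j) • d j := by
    simpa [d] using (d.sum_repr x).symm
  calc (s ⊗ₜ[K] 1) * ∑ i, b i ⊗ₜ[K] d i
      = ∑ i, ∑ j, B (s * b i) (d j) • (b j ⊗ₜ[K] d i) := by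
        simp_rw [Finset.mul_sum, Algebra.TensorProduct.tmul_mul_tmul, one_mul]
        refine Finset.sum_congr rfl fun i _ => ?_
        conv_lhs => rw [expand_b (s * b i)]
        simp_rw [TensorProduct.sum_tmul, TensorProduct.smul_tmul']
    _ = ∑ i, ∑ j, B (d i * s) (b j) • (b i ⊗ₜ[K] d j) := by
        rw [Finset.sum_comm]
        refine Finset.sum_congr rfl fun i _ => Finset.sum_congr rfl fun j _ => ?_
        rw [hsymm.eq, ← hassoc, hsymm.eq]
    _ = (∑ i, b i ⊗ₜ[K] d i) * (1 ⊗ₜ[K] s) := by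
        simp_rw [Finset.sum_mul, Algebra.TensorProduct.tmul_mul_tmul, mul_one]
        refine Finset.sum_congr rfl fun i _ => ?_
        conv_rhs => rw [expand_d (d i * s)]
        simp_rw [TensorProduct.tmul_sum, TensorProduct.tmul_smul]

theorem mul'_casimirElement_regularTraceForm [CharZero K] [FiniteDimensional K S]
    [IsSemisimpleRing S] :
    LinearMap.mul' K S
      (casimirElement (regularTraceForm K S) (regularTraceForm_nondegenerate K S) b) = 1 := by
  have htr := regularTraceForm_nondegenerate K S
  refine LinearMap.ker_eq_bot.mp htr.ker_eq_bot (LinearMap.ext fun y => ?_)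
  simp only [casimirElement, map_sum, LinearMap.mul'_apply, LinearMap.sum_apply,
    regularTraceForm_one_left_eq_sum_repr b y]
  refine Finset.sum_congr rfl fun i _ => ?_
  rw [regularTraceForm_isSymm.eq, ← regularTraceForm_mul_left,
    LinearMap.BilinForm.repr_apply_eq_apply_dualBasis htr b regularTraceForm_isSymm]

end Casimir

def IsSeparabilityIdempotent (K : Type*) {S : Type*} [CommRing K] [Ring S] [Algebra K S]
    (e : S ⊗[K] S) : Prop :=
  LinearMap.mul' K S e = 1 ∧ ∀ s : S, (s ⊗ₜ[K] 1) * e = e * (1 ⊗ₜ[K] s)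

theorem exists_isSeparabilityIdempotent (K S : Type*) [Field K] [CharZero K] [Ring S]
    [Algebra K S] [FiniteDimensional K S] [IsSemisimpleRing S] :
    ∃ e : S ⊗[K] S, IsSeparabilityIdempotent K e :=
  ⟨_, mul'_casimirElement_regularTraceForm (Module.finBasis K S),
    tmul_one_mul_casimirElement _ _ regularTraceForm_isSymm regularTraceForm_mul_left⟩

section Conjugation

variable {K S T R : Type*} [CommRing K] [Ring S] [Algebra K S] [Ring T] [Algebra K T]
  [Ring R] [Algebra K R]

namespace AlgHom

noncomputable def mulMap (f g : S →ₐ[K] T) : S ⊗[K] S →ₗ[K] T :=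
  LinearMap.mul' K T ∘ₗ TensorProduct.map f.toLinearMap g.toLinearMap

variable (f g : S →ₐ[K] T)

@[simp]
theorem mulMap_tmul (x y : S) : f.mulMap g (x ⊗ₜ[K] y) = f x * g y := rfl

theorem mulMap_tmul_one_mul (s : S) (z : S ⊗[K] S) :
    f.mulMap g ((s ⊗ₜ[K] 1) * z) = f s * f.mulMap g z := by
  induction z using TensorProduct.induction_on with
  | zero => simp
  | tmul x y => simp [mul_assoc]
  | add z w hz hw => rw [mul_add, map_add, hz, hw, map_add, mul_add]

theorem mulMap_mul_one_tmul (s : S) (z : S ⊗[K] S) :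
    f.mulMap g (z * (1 ⊗ₜ[K] s)) = f.mulMap g z * g s := by
  induction z using TensorProduct.induction_on with
  | zero => simp
  | tmul x y => simp [mul_assoc]
  | add z w hz hw => rw [add_mul, map_add, hz, hw, map_add, add_mul]

theorem map_mulMap_of_comp_eq {π : T →ₐ[K] R} (hfg : π.comp f = π.comp g) (z : S ⊗[K] S) :
    π (f.mulMap g z) = π (f (LinearMap.mul' K S z)) := by
  induction z using TensorProduct.induction_on with
  | zero => simp
  | tmul x y =>
    rw [mulMap_tmul, LinearMap.mul'_apply, map_mul, map_mul, map_mul, ← AlgHom.comp_apply π g,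
      ← hfg, AlgHom.comp_apply]
  | add z w hz hw => simp only [map_add, hz, hw]

end AlgHom

theorem NilpotentKernel.isNilpotent {π : T →+* R} (hπ : NilpotentKernel π) {x : T}
    (hx : π x = 0) : IsNilpotent x := by
  obtain ⟨k, -, hk⟩ := hπ
  refine ⟨k, ?_⟩
  simpa using hk (List.replicate k x) List.length_replicate
    fun y hy => List.eq_of_mem_replicate hy ▸ hx

theorem NilpotentKernel.isUnit {π : T →+* R} (hπ : NilpotentKernel π) {u : T}
    (hu : π u = 1) : IsUnit u := by
  simpa using (hπ.isNilpotent (x := 1 - u) (by simp [hu])).isUnit_one_sub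

theorem comp_conj_of_map_eq_one (π : T →ₐ[K] R) {u : Tˣ} (hu : π (u : T) = 1) :
    π.comp (MulSemiringAction.toAlgHom K T (ConjAct.toConjAct u)) = π := by
  ext x
  have hu' : π ↑u⁻¹ = 1 := by simpa [hu] using (map_mul π ↑u⁻¹ (u : T)).symm
  simp [ConjAct.units_smul_def, hu, hu']

theorem exists_unit_conj_eq_of_comp_eq {e : S ⊗[K] S} (he : IsSeparabilityIdempotent K e)
    (π : T →ₐ[K] R) (hπ : NilpotentKernel (π : T →+* R)) {f g : S →ₐ[K] T}
    (hfg : π.comp f = π.comp g) :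
    ∃ u : Tˣ, π (u : T) = 1 ∧
      f = (MulSemiringAction.toAlgHom K T (ConjAct.toConjAct u)).comp g := by
  have hπu : π (f.mulMap g e) = 1 := by
    rw [f.map_mulMap_of_comp_eq g hfg, he.1, map_one, map_one]
  have hintertwine (s : S) : f s * f.mulMap g e = f.mulMap g e * g s := by
    rw [← f.mulMap_tmul_one_mul, ← f.mulMap_mul_one_tmul, he.2]
  obtain ⟨u, hu⟩ := hπ.isUnit hπu
  refine ⟨u, hu ▸ hπu, AlgHom.ext fun s => ?_⟩
  rw [← hu] at hintertwine
  simp [ConjAct.units_smul_def, ← hintertwine, mul_assoc]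

end Conjugation

/-- The amalgamated coproduct `A = S₁ ∗_S S₂` of formally smooth algebras `S₁, S₂`
over a finite-dimensional semisimple algebra `S` is formally smooth. -/
theorem amalgamated_coproduct_formally_smooth
    (S S₁ S₂ A : Type) [Ring S] [Algebra ℂ S] [Ring S₁] [Algebra ℂ S₁]
    [Ring S₂] [Algebra ℂ S₂] [Ring A] [Algebra ℂ A]
    [FiniteDimensional ℂ S] [IsSemisimpleRing S]
    (ι₁ : S →ₐ[ℂ] S₁) (ι₂ : S →ₐ[ℂ] S₂)
    (hS₁ : FormSmooth S₁) (hS₂ : FormSmooth S₂)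
    (j₁ : S₁ →ₐ[ℂ] A) (j₂ : S₂ →ₐ[ℂ] A)
    (hcomm : j₁.comp ι₁ = j₂.comp ι₂)
    (huniv : ∀ (C : Type) [Ring C] [Algebra ℂ C] (f₁ : S₁ →ₐ[ℂ] C) (f₂ : S₂ →ₐ[ℂ] C),
      f₁.comp ι₁ = f₂.comp ι₂ → ∃! g : A →ₐ[ℂ] C, g.comp j₁ = f₁ ∧ g.comp j₂ = f₂) :
    FormSmooth A := by
  intro T _ _ R _ _ π hsurj hker φ
  obtain ⟨ψ₁, hψ₁⟩ := hS₁ T R π hsurj hker (φ.comp j₁)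
  obtain ⟨ψ₂, hψ₂⟩ := hS₂ T R π hsurj hker (φ.comp j₂)
  have hφ : (φ.comp j₁).comp ι₁ = (φ.comp j₂).comp ι₂ := by
    rw [AlgHom.comp_assoc, AlgHom.comp_assoc, hcomm]
  obtain ⟨e, he⟩ := exists_isSeparabilityIdempotent ℂ S
  obtain ⟨u, hu, hconj⟩ := exists_unit_conj_eq_of_comp_eq he π hker
    (f := ψ₁.comp ι₁) (g := ψ₂.comp ι₂) (by simp only [← AlgHom.comp_assoc, hψ₁, hψ₂, hφ])
  set conj := MulSemiringAction.toAlgHom ℂ T (ConjAct.toConjAct u)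
  obtain ⟨ψ, ⟨hψj₁, hψj₂⟩, -⟩ := huniv T ψ₁ (conj.comp ψ₂) (by rw [hconj, AlgHom.comp_assoc])
  refine ⟨ψ, (huniv R _ _ hφ).unique ⟨?_, ?_⟩ ⟨rfl, rfl⟩⟩
  · rw [AlgHom.comp_assoc, hψj₁, hψ₁]
  · rw [AlgHom.comp_assoc, hψj₂, ← AlgHom.comp_assoc, comp_conj_of_map_eq_one π hu, hψ₂]
end

section
/- Let S be a finite-dimensional semisimple unital associative ℂ-algebra, T a unital associative ℂ-algebra, I ⊆ T a nilpotent two-sided ideal, and π : T → T/I the quotient map. If α, β : S → T are ℂ-algebra homomorphisms with π ∘ α = π ∘ β, then there exists a unit t ∈ Tˣ with π(t) = 1 such that α(s) = t⁻¹ · β(s) · t for all s ∈ S. -/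
namespace NilpotentKernel

variable {T R : Type*} [Ring T] [Ring R] {π : T →+* R}

theorem isNilpotent_s1 (hπ : NilpotentKernel π) {x : T} (hx : π x = 0) : IsNilpotent x := by
  obtain ⟨k, -, hk⟩ := hπ
  refine ⟨k, ?_⟩
  simpa [List.prod_replicate] using
    hk (List.replicate k x) (List.length_replicate ..) fun y hy => List.eq_of_mem_replicate hy ▸ hx

theorem isUnit_of_map_eq_one (hπ : NilpotentKernel π) {t : T} (ht : π t = 1) : IsUnit t := by
  simpa using (hπ.isNilpotent_s1 (x := t - 1) (by rw [map_sub, ht, map_one, sub_self])).isUnit_add_one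

end NilpotentKernel

open LinearMap

namespace LinearMap.BilinForm

variable {K S : Type*} [Field K] [Ring S] [Algebra K S]

theorem nondegenerate_of_idempotent_apply_self_ne_zero [FiniteDimensional K S]
    [IsSemisimpleRing S] {B : LinearMap.BilinForm K S} (hsymm : B.IsSymm)
    (hassoc : ∀ a b c, B (a * b) c = B a (b * c))
    (hidem : ∀ e, IsIdempotentElem e → e ≠ 0 → B e e ≠ 0) : B.Nondegenerate := by
  refine .ofSeparatingLeft fun a ha => ?_
  let J : Ideal S :=
    { carrier := {a | ∀ b, B a b = 0}
      add_mem' := fun hu hv b => by simp [hu b, hv b]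
      zero_mem' := fun b => by simp
      smul_mem' := fun s a ha b => by
        rw [smul_eq_mul, hsymm.eq, ← hassoc, hsymm.eq]
        exact ha _ }
  obtain ⟨e, he, hJ⟩ := IsSemisimpleRing.ideal_eq_span_idempotent J
  have he0 : e = 0 := by
    by_contra hne
    have heJ : e ∈ J := hJ ▸ Ideal.subset_span rfl
    exact hidem e he hne (heJ e)
  have haJ : a ∈ J := ha
  rw [hJ, he0, Set.singleton_zero, Ideal.span_zero] at haJ
  simpa using haJ

variable {B : LinearMap.BilinForm K S} {ι : Type*} [Fintype ι] [DecidableEq ι]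

theorem mul_sum_dualBasis_mul (hB : B.Nondegenerate) (hsymm : B.IsSymm)
    (hassoc : ∀ a b c, B (a * b) c = B a (b * c)) (b : Module.Basis ι K S)
    {A : Type*} [Ring A] [Algebra K A] (φ ψ : S →ₐ[K] A) (s : S) :
    φ s * ∑ i, φ (B.dualBasis hB b i) * ψ (b i) =
      (∑ i, φ (B.dualBasis hB b i) * ψ (b i)) * ψ s := by
  set y := B.dualBasis hB b
  have hφ : ∀ v, φ v = ∑ j, B v (b j) • φ (y j) := fun v => by
    conv_lhs => rw [← y.sum_repr v]
    simp [y, map_sum, map_smul]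
  have hrepr : ∀ v j, b.repr v j = B v (y j) := fun v j => by
    conv_lhs => rw [← dualBasis_dualBasis hB hsymm b]
    exact dualBasis_repr_apply ..
  have hψ : ∀ v, ψ v = ∑ j, B v (y j) • ψ (b j) := fun v => by
    conv_lhs => rw [← b.sum_repr v]
    simp [hrepr]
  have hcoeff : ∀ i j, B (s * y i) (b j) = B (b j * s) (y i) := fun i j => by
    rw [hsymm.eq, hassoc]
  calc φ s * ∑ i, φ (y i) * ψ (b i)
      = ∑ i, ∑ j, B (b j * s) (y i) • (φ (y j) * ψ (b i)) := by
        simp only [Finset.mul_sum, ← mul_assoc, ← map_mul, hφ (s * _), Finset.sum_mul,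
          smul_mul_assoc, hcoeff]
    _ = ∑ j, ∑ i, B (b j * s) (y i) • (φ (y j) * ψ (b i)) := Finset.sum_comm
    _ = (∑ i, φ (y i) * ψ (b i)) * ψ s := by
        simp only [Finset.sum_mul, mul_assoc, ← map_mul, hψ (b _ * s), Finset.mul_sum,
          mul_smul_comm]

theorem trace_mulLeft_eq_apply_sum_dualBasis_mul (hB : B.Nondegenerate)
    (hassoc : ∀ a b c, B (a * b) c = B a (b * c)) (b : Module.Basis ι K S) (w : S) :
    trace K S (mulLeft K w) = B w (∑ i, B.dualBasis hB b i * b i) := by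
  rw [trace_eq_matrix_trace K (B.dualBasis hB b), Matrix.trace, map_sum]
  refine Finset.sum_congr rfl fun i _ => ?_
  rw [Matrix.diag_apply, LinearMap.toMatrix_apply, mulLeft_apply, dualBasis_repr_apply, hassoc]

end LinearMap.BilinForm

section LeftTraceForm

variable (K S : Type*) [Field K] [Ring S] [Algebra K S]

noncomputable def leftTraceForm : LinearMap.BilinForm K S :=
  (LinearMap.mul K S).compr₂ (trace K S ∘ₗ LinearMap.mul K S)

variable {K S}

@[simp]
theorem leftTraceForm_apply (a b : S) :
    leftTraceForm K S a b = trace K S (mulLeft K (a * b)) := rfl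

theorem leftTraceForm_isSymm : (leftTraceForm K S).IsSymm :=
  ⟨fun a b => by simp only [leftTraceForm_apply, mulLeft_mul, ← Module.End.mul_eq_comp,
    trace_mul_comm]⟩

theorem leftTraceForm_mul_left (a b c : S) :
    leftTraceForm K S (a * b) c = leftTraceForm K S a (b * c) := by
  simp only [leftTraceForm_apply, mul_assoc]

variable (K S) in
theorem leftTraceForm_nondegenerate [CharZero K] [FiniteDimensional K S] [IsSemisimpleRing S] :
    (leftTraceForm K S).Nondegenerate := by
  refine LinearMap.BilinForm.nondegenerate_of_idempotent_apply_self_ne_zero leftTraceForm_isSymm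
    leftTraceForm_mul_left fun e he hne => ?_
  have hL : IsIdempotentElem (mulLeft K e : Module.End K S) := by
    rw [IsIdempotentElem, Module.End.mul_eq_comp, ← mulLeft_mul, he.eq]
  rwa [leftTraceForm_apply, he.eq, Ne, hL.trace_eq_zero_iff, mulLeft_eq_zero_iff]

theorem sum_dualBasis_mul_eq_one [CharZero K] [FiniteDimensional K S] [IsSemisimpleRing S]
    {ι : Type*} [Fintype ι] [DecidableEq ι] (b : Module.Basis ι K S) :
    ∑ i, (leftTraceForm K S).dualBasis (leftTraceForm_nondegenerate K S) b i * b i = 1 := by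
  refine sub_eq_zero.mp <| (leftTraceForm_nondegenerate K S).2 _ fun w => ?_
  rw [map_sub, ← LinearMap.BilinForm.trace_mulLeft_eq_apply_sum_dualBasis_mul _
    leftTraceForm_mul_left, leftTraceForm_apply, mul_one, sub_self]

end LeftTraceForm

theorem AlgHom.exists_intertwiner_of_comp_eq {K S T R : Type*} [Field K] [CharZero K] [Ring S]
    [Algebra K S] [FiniteDimensional K S] [IsSemisimpleRing S] [Ring T] [Algebra K T] [Ring R]
    [Algebra K R] (π : T →ₐ[K] R) {α β : S →ₐ[K] T} (h : π.comp α = π.comp β) :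
    ∃ t : T, π t = 1 ∧ ∀ s, β s * t = t * α s := by
  let b := Module.finBasis K S
  let y := (leftTraceForm K S).dualBasis (leftTraceForm_nondegenerate K S) b
  have hβ : ∀ v, π (β v) = π (α v) := fun v => (AlgHom.congr_fun h v).symm
  refine ⟨∑ i, β (y i) * α (b i), ?_, LinearMap.BilinForm.mul_sum_dualBasis_mul _
    leftTraceForm_isSymm leftTraceForm_mul_left b β α⟩
  calc π (∑ i, β (y i) * α (b i)) = π (α (∑ i, y i * b i)) := by
        simp only [map_sum, map_mul, hβ]
    _ = 1 := by rw [sum_dualBasis_mul_eq_one, map_one, map_one]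

theorem lifts_conjugate_by_unit_general
    (S T R : Type) [Ring S] [Algebra ℂ S] [FiniteDimensional ℂ S] [IsSemisimpleRing S]
    [Ring T] [Algebra ℂ T] [Ring R] [Algebra ℂ R]
    (π : T →ₐ[ℂ] R) (hnil : NilpotentKernel (π : T →+* R))
    (α β : S →ₐ[ℂ] T) (h : π.comp α = π.comp β) :
    ∃ t : Tˣ, π (t : T) = 1 ∧ ∀ s : S, α s = (↑t⁻¹ : T) * β s * (t : T) := by
  obtain ⟨t, hπt, hβα⟩ := π.exists_intertwiner_of_comp_eq h
  obtain ⟨u, rfl⟩ := hnil.isUnit_of_map_eq_one hπt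
  exact ⟨u, hπt, fun s => by rw [mul_assoc, hβα, ← mul_assoc, Units.inv_mul, one_mul]⟩

/-- Cuntz–Quillen: two `ℂ`-algebra maps from a finite-dimensional semisimple algebra `S`
to `T` that agree modulo a nilpotent two-sided ideal (the kernel of the quotient map
`π : T → T/I`) are conjugate by a unit `t` of `T` with `π t = 1`. -/
theorem lifts_conjugate_by_unit
    (S T R : Type) [Ring S] [Algebra ℂ S] [FiniteDimensional ℂ S] [IsSemisimpleRing S]
    [Ring T] [Algebra ℂ T] [Ring R] [Algebra ℂ R]
    (π : T →ₐ[ℂ] R) (hπ : Function.Surjective π) (hnil : NilpotentKernel (π : T →+* R))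
    (α β : S →ₐ[ℂ] T) (h : π.comp α = π.comp β) :
    ∃ t : Tˣ, π (t : T) = 1 ∧ ∀ s : S, α s = (↑t⁻¹ : T) * β s * (t : T) :=
  lifts_conjugate_by_unit_general S T R π hnil α β h
end

section
/- Fix natural numbers a₁, a₂, b₁, b₂ and set n = a₁ + a₂ + b₁ + b₂. Let S₁ (size a₁×a₂), T₁ (a₂×a₁), S₂ (b₁×b₂), T₂ (b₂×b₁) be arbitrary complex matrices. Define the n×n block matrices M_s = blockdiag([[1_{a₁}, S₁],[0, −1_{a₂}]], [[1_{b₁}, S₂],[0, −1_{b₂}]]) and M_t = blockdiag([[1_{a₁}, 0],[T₁, −1_{a₂}]], [[−1_{b₁}, 0],[T₂, 1_{b₂}]]). Then M_s² = 1_n and M_t² = 1_n, and consequently there is a group homomorphism from the infinite dihedral group D∞, presented as ⟨s, t | s² = 1, t² = 1⟩ (PresentedGroup), to the group of invertible n×n complex matrices, sending s to M_s and t to M_t. -/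
open Matrix

/-- Relations of the infinite dihedral group `D∞ = ⟨s, t | s² = 1, t² = 1⟩`, with
`s` encoded as `true` and `t` as `false`. -/
def dihedralRels : Set (FreeGroup Bool) :=
  {FreeGroup.of true ^ 2, FreeGroup.of false ^ 2}

/-- The block matrix image of the generator `s`. -/
def Ms (a₁ a₂ b₁ b₂ : ℕ) (S₁ : Matrix (Fin a₁) (Fin a₂) ℂ) (S₂ : Matrix (Fin b₁) (Fin b₂) ℂ) :
    Matrix ((Fin a₁ ⊕ Fin a₂) ⊕ (Fin b₁ ⊕ Fin b₂)) ((Fin a₁ ⊕ Fin a₂) ⊕ (Fin b₁ ⊕ Fin b₂)) ℂ :=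
  fromBlocks (fromBlocks 1 S₁ 0 (-1)) 0 0 (fromBlocks 1 S₂ 0 (-1))

/-- The block matrix image of the generator `t`. -/
def Mt (a₁ a₂ b₁ b₂ : ℕ) (T₁ : Matrix (Fin a₂) (Fin a₁) ℂ) (T₂ : Matrix (Fin b₂) (Fin b₁) ℂ) :
    Matrix ((Fin a₁ ⊕ Fin a₂) ⊕ (Fin b₁ ⊕ Fin b₂)) ((Fin a₁ ⊕ Fin a₂) ⊕ (Fin b₁ ⊕ Fin b₂)) ℂ :=
  fromBlocks (fromBlocks 1 0 T₁ (-1)) 0 0 (fromBlocks (-1) 0 T₂ 1)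

/-!
`Ms` and `Mt` are block triangular, and a block triangular matrix squares to `1` as soon as its
diagonal blocks do and its off-diagonal block `X` satisfies `A X + X D = 0` (upper) or
`X A + D X = 0` (lower). For the inner `2 × 2` blocks this holds for every `X`, because their
diagonal blocks are `1` and `-1` in some order. Two involutions satisfy the defining relations
of `D∞`.
-/

namespace Matrix

variable {l m R : Type*} [Fintype l] [Fintype m] [DecidableEq l] [DecidableEq m] [Ring R]

theorem fromBlocks_upper_sq_eq_one {A : Matrix l l R} {B : Matrix l m R} {D : Matrix m m R}
    (hA : A ^ 2 = 1) (hD : D ^ 2 = 1) (hB : A * B + B * D = 0) :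
    fromBlocks A B 0 D ^ 2 = 1 := by
  rw [sq] at hA hD ⊢
  simp [fromBlocks_multiply, hA, hD, hB, ← fromBlocks_one]

theorem fromBlocks_lower_sq_eq_one {A : Matrix l l R} {C : Matrix m l R} {D : Matrix m m R}
    (hA : A ^ 2 = 1) (hD : D ^ 2 = 1) (hC : C * A + D * C = 0) :
    fromBlocks A 0 C D ^ 2 = 1 := by
  rw [sq] at hA hD ⊢
  simp [fromBlocks_multiply, hA, hD, hC, ← fromBlocks_one]

theorem fromBlocks_diagonal_sq_eq_one {A : Matrix l l R} {D : Matrix m m R}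
    (hA : A ^ 2 = 1) (hD : D ^ 2 = 1) : fromBlocks A 0 0 D ^ 2 = 1 :=
  fromBlocks_upper_sq_eq_one hA hD (by simp)

theorem fromBlocks_one_neg_one_sq_eq_one (B : Matrix l m R) :
    fromBlocks (1 : Matrix l l R) B 0 (-1 : Matrix m m R) ^ 2 = 1 :=
  fromBlocks_upper_sq_eq_one (one_pow 2) (by simp) (by simp)

theorem fromBlocks_lower_one_neg_one_sq_eq_one (C : Matrix m l R) :
    fromBlocks (1 : Matrix l l R) 0 C (-1 : Matrix m m R) ^ 2 = 1 :=
  fromBlocks_lower_sq_eq_one (one_pow 2) (by simp) (by simp)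

theorem fromBlocks_lower_neg_one_one_sq_eq_one (C : Matrix m l R) :
    fromBlocks (-1 : Matrix l l R) 0 C (1 : Matrix m m R) ^ 2 = 1 :=
  fromBlocks_lower_sq_eq_one (by simp) (one_pow 2) (by simp)

end Matrix

theorem exists_dihedral_hom {G : Type*} [Group G] {u v : G} (hu : u ^ 2 = 1) (hv : v ^ 2 = 1) :
    ∃ φ : PresentedGroup dihedralRels →* G,
      φ (PresentedGroup.of true) = u ∧ φ (PresentedGroup.of false) = v := by
  have hrels : ∀ r ∈ dihedralRels, FreeGroup.lift (fun b => if b then u else v) r = 1 := by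
    rintro r (rfl | rfl) <;> simpa
  exact ⟨PresentedGroup.toGroup hrels, PresentedGroup.toGroup.of hrels,
    PresentedGroup.toGroup.of hrels⟩

/-- The explicit family of `D∞`-representations obtained from the one-quiver of `ℂD∞`:
the block matrices `Ms` and `Mt` square to the identity, and hence determine a group
homomorphism from `D∞ = ⟨s, t | s² = 1, t² = 1⟩` to invertible `n×n` complex matrices
sending `s ↦ Ms` and `t ↦ Mt`. -/
theorem dihedral_representation_from_quiver
    (a₁ a₂ b₁ b₂ : ℕ)
    (S₁ : Matrix (Fin a₁) (Fin a₂) ℂ) (T₁ : Matrix (Fin a₂) (Fin a₁) ℂ)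
    (S₂ : Matrix (Fin b₁) (Fin b₂) ℂ) (T₂ : Matrix (Fin b₂) (Fin b₁) ℂ) :
    Ms a₁ a₂ b₁ b₂ S₁ S₂ ^ 2 = 1 ∧ Mt a₁ a₂ b₁ b₂ T₁ T₂ ^ 2 = 1 ∧
      ∃ φ : PresentedGroup dihedralRels →*
          (Matrix ((Fin a₁ ⊕ Fin a₂) ⊕ (Fin b₁ ⊕ Fin b₂)) ((Fin a₁ ⊕ Fin a₂) ⊕ (Fin b₁ ⊕ Fin b₂)) ℂ)ˣ,
        (φ (PresentedGroup.of true) : Matrix _ _ ℂ) = Ms a₁ a₂ b₁ b₂ S₁ S₂ ∧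
        (φ (PresentedGroup.of false) : Matrix _ _ ℂ) = Mt a₁ a₂ b₁ b₂ T₁ T₂ := by
  have hMs : Ms a₁ a₂ b₁ b₂ S₁ S₂ ^ 2 = 1 :=
    fromBlocks_diagonal_sq_eq_one (fromBlocks_one_neg_one_sq_eq_one S₁)
      (fromBlocks_one_neg_one_sq_eq_one S₂)
  have hMt : Mt a₁ a₂ b₁ b₂ T₁ T₂ ^ 2 = 1 :=
    fromBlocks_diagonal_sq_eq_one (fromBlocks_lower_one_neg_one_sq_eq_one T₁)
      (fromBlocks_lower_neg_one_one_sq_eq_one T₂)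
  obtain ⟨φ, hs, ht⟩ :=
    exists_dihedral_hom (Units.pow_ofPowEqOne hMs two_ne_zero)
      (Units.pow_ofPowEqOne hMt two_ne_zero)
  exact ⟨hMs, hMt, φ, by simp [hs], by simp [ht]⟩
end

section
/- B³ = 1_n, i.e. the matrix B cubes to the n×n identity matrix, for every choice of the complex matrices S₂, S₄, S₆, T₁, T₃, T₅. -/
noncomputable section

open Matrix

/-- The primitive third root of unity `ρ = exp(2πi/3)`. -/
def ρ : ℂ := Complex.exp (2 * Real.pi * Complex.I / 3)

/-- The index set of the `6×6`-block matrices with block sizes `a 0, …, a 5`. -/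
abbrev BIdx (a : Fin 6 → ℕ) := (i : Fin 6) × Fin (a i)

/-- The `n×n` matrix with the block `M` in block position `(i, j)` and zeroes elsewhere. -/
def emb {a : Fin 6 → ℕ} (i j : Fin 6) (M : Matrix (Fin (a i)) (Fin (a j)) ℂ) :
    Matrix (BIdx a) (BIdx a) ℂ := fun p q =>
  if h : p.1 = i ∧ q.1 = j then
    M (Fin.cast (congrArg a h.1) p.2) (Fin.cast (congrArg a h.2) q.2)
  else 0

variable {a : Fin 6 → ℕ}

/-- The matrix `A`: diagonal blocks `(1, −1, 1, −1, 1, −1)` and off-diagonal blocks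
`A₁₂ = iρS₁`, `A₁₆ = T₆`, `A₃₂ = T₂`, `A₃₄ = iρ²S₃`, `A₅₄ = T₄`, `A₅₆ = iS₅`. -/
def Amat (S₁ : Matrix (Fin (a 0)) (Fin (a 1)) ℂ) (S₃ : Matrix (Fin (a 2)) (Fin (a 3)) ℂ)
    (S₅ : Matrix (Fin (a 4)) (Fin (a 5)) ℂ) (T₂ : Matrix (Fin (a 2)) (Fin (a 1)) ℂ)
    (T₄ : Matrix (Fin (a 4)) (Fin (a 3)) ℂ) (T₆ : Matrix (Fin (a 0)) (Fin (a 5)) ℂ) :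
    Matrix (BIdx a) (BIdx a) ℂ :=
  emb 0 0 1 + emb 1 1 (-1) + emb 2 2 1 + emb 3 3 (-1) + emb 4 4 1 + emb 5 5 (-1) +
    emb 0 1 ((Complex.I * ρ) • S₁) + emb 0 5 T₆ + emb 2 1 T₂ +
    emb 2 3 ((Complex.I * ρ ^ 2) • S₃) + emb 4 3 T₄ + emb 4 5 (Complex.I • S₅)

/-- The matrix `B`: diagonal blocks `(1, ρ, ρ², 1, ρ, ρ²)` and off-diagonal blocks
`B₂₁ = iT₁`, `B₂₃ = S₂`, `B₄₃ = iT₃`, `B₄₅ = ρS₄`, `B₆₁ = ρ²S₆`, `B₆₅ = iT₅`. -/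
def Bmat (S₂ : Matrix (Fin (a 1)) (Fin (a 2)) ℂ) (S₄ : Matrix (Fin (a 3)) (Fin (a 4)) ℂ)
    (S₆ : Matrix (Fin (a 5)) (Fin (a 0)) ℂ) (T₁ : Matrix (Fin (a 1)) (Fin (a 0)) ℂ)
    (T₃ : Matrix (Fin (a 3)) (Fin (a 2)) ℂ) (T₅ : Matrix (Fin (a 5)) (Fin (a 4)) ℂ) :
    Matrix (BIdx a) (BIdx a) ℂ :=
  emb 0 0 1 + emb 1 1 (ρ • 1) + emb 2 2 (ρ ^ 2 • 1) + emb 3 3 1 + emb 4 4 (ρ • 1) +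
    emb 5 5 (ρ ^ 2 • 1) + emb 1 0 (Complex.I • T₁) + emb 1 2 S₂ +
    emb 3 2 (Complex.I • T₃) + emb 3 4 (ρ • S₄) + emb 5 0 (ρ ^ 2 • S₆) +
    emb 5 4 (Complex.I • T₅)

/-!
Write `B = D + N`, where `D` is the diagonal part, with the cube roots of unity
`1, ρ, ρ², 1, ρ, ρ²` on the blocks, and `N` the off-diagonal part. `N` maps blocks `1, 3, 5`
into blocks `2, 4, 6` only, so `N X N = 0` for every diagonal `X`, and
`(D + N)³ = D³ + D²N + DND + ND²`. The `(p, q)` entry of the last three terms is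
`(d_p² + d_p d_q + d_q²) N_pq`, which vanishes because `d_p` and `d_q` are distinct cube roots
of unity wherever `N_pq ≠ 0`.
-/

theorem isPrimitiveRoot_ρ : IsPrimitiveRoot ρ 3 := by
  simpa [ρ] using Complex.isPrimitiveRoot_exp 3 (by norm_num)

theorem ρ_pow_eq_ρ_pow_iff {m n : ℕ} : ρ ^ m = ρ ^ n ↔ m ≡ n [MOD 3] := by
  rw [(isPrimitiveRoot_ρ.isOfFinOrder three_ne_zero).pow_eq_pow_iff_modEq,
    ← isPrimitiveRoot_ρ.eq_orderOf]

theorem sq_add_mul_add_sq_eq_zero {R : Type*} [CommRing R] [IsDomain R] {x y : R}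
    (h : x ^ 3 = y ^ 3) (hne : x ≠ y) : x ^ 2 + x * y + y ^ 2 = 0 := by
  have : (x - y) * (x ^ 2 + x * y + y ^ 2) = 0 := by linear_combination h
  exact (mul_eq_zero.mp this).resolve_left (sub_ne_zero.mpr hne)

theorem add_pow_three_eq_one {R : Type*} [Ring R] {D N : R} (hD : D ^ 3 = 1)
    (hNN : N * N = 0) (hNDN : N * D * N = 0) (h : D ^ 2 * N + D * N * D + N * D ^ 2 = 0) :
    (D + N) ^ 3 = 1 := calc
  (D + N) ^ 3 = D ^ 3 + (D ^ 2 * N + D * N * D + N * D ^ 2) +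
      (D * (N * N) + N * D * N + N * N * D + N * N * N) := by noncomm_ring
  _ = 1 := by simp [hD, hNN, hNDN, h]

namespace Matrix

variable {ι R : Type*} [Fintype ι] [DecidableEq ι]

theorem mul_diagonal_mul_eq_zero [CommRing R] {N : Matrix ι ι R}
    (hN : ∀ p q r, N p q * N q r = 0) (e : ι → R) : N * diagonal e * N = 0 := by
  ext p r
  rw [mul_apply, zero_apply]
  exact Finset.sum_eq_zero fun q _ => by rw [mul_diagonal, mul_right_comm, hN, zero_mul]

theorem diagonal_add_pow_three_eq_one [CommRing R] [IsDomain R] {d : ι → R}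
    (hd : ∀ i, d i ^ 3 = 1) (s : Set ι) {N : Matrix ι ι R}
    (hN : ∀ p q, N p q ≠ 0 → p ∈ s ∧ q ∉ s ∧ d p ≠ d q) : (diagonal d + N) ^ 3 = 1 := by
  have hNN : ∀ p q r, N p q * N q r = 0 := fun p q r => by
    by_contra h
    exact (hN p q (left_ne_zero_of_mul h)).2.1 (hN q r (right_ne_zero_of_mul h)).1
  refine add_pow_three_eq_one ?_ (by simpa using mul_diagonal_mul_eq_zero hNN 1)
    (mul_diagonal_mul_eq_zero hNN d) ?_
  · rw [diagonal_pow, show d ^ 3 = 1 from funext hd]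
    exact diagonal_one
  · ext p q
    simp only [diagonal_pow, diagonal_mul, mul_diagonal, add_apply, zero_apply, Pi.pow_apply]
    by_cases hpq : N p q = 0
    · simp [hpq]
    · linear_combination N p q *
        sq_add_mul_add_sq_eq_zero (by rw [hd, hd]) (hN p q hpq).2.2

end Matrix

theorem sum_emb_smul_one (c : Fin 6 → ℂ) :
    ∑ i, emb (a := a) i i (c i • 1) = diagonal fun p => c p.1 := by
  ext ⟨i, x⟩ ⟨j, y⟩
  rw [Matrix.sum_apply, Finset.sum_eq_single i (fun k _ hk => dif_neg fun h => hk h.1.symm)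
    (by simp)]
  by_cases hij : i = j
  · subst hij
    simp [emb, diagonal, Matrix.one_apply]
  · simp [emb, diagonal, hij, Ne.symm hij]

def BmatOffDiag (S₂ : Matrix (Fin (a 1)) (Fin (a 2)) ℂ) (S₄ : Matrix (Fin (a 3)) (Fin (a 4)) ℂ)
    (S₆ : Matrix (Fin (a 5)) (Fin (a 0)) ℂ) (T₁ : Matrix (Fin (a 1)) (Fin (a 0)) ℂ)
    (T₃ : Matrix (Fin (a 3)) (Fin (a 2)) ℂ) (T₅ : Matrix (Fin (a 5)) (Fin (a 4)) ℂ) :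
    Matrix (BIdx a) (BIdx a) ℂ :=
  emb 1 0 (Complex.I • T₁) + emb 1 2 S₂ + emb 3 2 (Complex.I • T₃) + emb 3 4 (ρ • S₄) +
    emb 5 0 (ρ ^ 2 • S₆) + emb 5 4 (Complex.I • T₅)

section
variable (S₂ : Matrix (Fin (a 1)) (Fin (a 2)) ℂ) (S₄ : Matrix (Fin (a 3)) (Fin (a 4)) ℂ)
    (S₆ : Matrix (Fin (a 5)) (Fin (a 0)) ℂ) (T₁ : Matrix (Fin (a 1)) (Fin (a 0)) ℂ)
    (T₃ : Matrix (Fin (a 3)) (Fin (a 2)) ℂ) (T₅ : Matrix (Fin (a 5)) (Fin (a 4)) ℂ)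

theorem Bmat_eq_diagonal_add_offDiag :
    Bmat S₂ S₄ S₆ T₁ T₃ T₅ =
      diagonal (fun p => ρ ^ (p.1 : ℕ)) + BmatOffDiag S₂ S₄ S₆ T₁ T₃ T₅ := by
  rw [← sum_emb_smul_one fun i => ρ ^ (i : ℕ), Fin.sum_univ_six, Bmat, BmatOffDiag]
  have h3 : ρ ^ 3 = ρ ^ 0 := ρ_pow_eq_ρ_pow_iff.mpr rfl
  have h4 : ρ ^ 4 = ρ ^ 1 := ρ_pow_eq_ρ_pow_iff.mpr rfl
  have h5 : ρ ^ 5 = ρ ^ 2 := ρ_pow_eq_ρ_pow_iff.mpr rfl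
  norm_num [h3, h4, h5]
  abel

theorem BmatOffDiag_apply_ne_zero {p q : BIdx a} (h : BmatOffDiag S₂ S₄ S₆ T₁ T₃ T₅ p q ≠ 0) :
    Odd (p.1 : ℕ) ∧ ¬Odd (q.1 : ℕ) ∧ ρ ^ (p.1 : ℕ) ≠ ρ ^ (q.1 : ℕ) := by
  rw [Ne, ρ_pow_eq_ρ_pow_iff]
  by_contra hpq
  have hzero : ∀ i j (M : Matrix (Fin (a i)) (Fin (a j)) ℂ),
      Odd (i : ℕ) ∧ ¬Odd (j : ℕ) ∧ ¬(i : ℕ) ≡ j [MOD 3] → emb i j M p q = 0 :=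
    fun i j M hij => dif_neg fun ⟨hi, hj⟩ => hpq (hi ▸ hj ▸ hij)
  apply h
  simp only [BmatOffDiag, Matrix.add_apply]
  rw [hzero 1 0 _ (by decide), hzero 1 2 _ (by decide), hzero 3 2 _ (by decide),
    hzero 3 4 _ (by decide), hzero 5 0 _ (by decide), hzero 5 4 _ (by decide)]
  simp only [add_zero]

end

/-- `B³ = 1`: the matrix `B` cubes to the `n×n` identity matrix, for every choice
of the complex matrices `S₂, S₄, S₆, T₁, T₃, T₅`. -/
theorem Bmat_cube_eq_one (a : Fin 6 → ℕ)
    (S₂ : Matrix (Fin (a 1)) (Fin (a 2)) ℂ) (S₄ : Matrix (Fin (a 3)) (Fin (a 4)) ℂ)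
    (S₆ : Matrix (Fin (a 5)) (Fin (a 0)) ℂ) (T₁ : Matrix (Fin (a 1)) (Fin (a 0)) ℂ)
    (T₃ : Matrix (Fin (a 3)) (Fin (a 2)) ℂ) (T₅ : Matrix (Fin (a 5)) (Fin (a 4)) ℂ) :
    Bmat S₂ S₄ S₆ T₁ T₃ T₅ ^ 3 = 1 := by
  rw [Bmat_eq_diagonal_add_offDiag]
  -- Block indices are 0-based: `Odd` selects the blocks numbered 2, 4, 6 in the statement.
  refine diagonal_add_pow_three_eq_one (fun p => ?_) {p : BIdx a | Odd (p.1 : ℕ)}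
    fun p q h => BmatOffDiag_apply_ne_zero S₂ S₄ S₆ T₁ T₃ T₅ h
  rw [pow_right_comm, isPrimitiveRoot_ρ.pow_eq_one, one_pow]
end
end

section
/- Suppose the matrices satisfy the six deformed preprojective relations T₆S₆ − S₁T₁ = 1_{a₁}, T₁S₁ − S₂T₂ = ρ²·1_{a₂}, T₂S₂ − S₃T₃ = ρ·1_{a₃}, T₃S₃ − S₄T₄ = 1_{a₄}, T₄S₄ − S₅T₅ = ρ²·1_{a₅}, T₅S₅ − S₆T₆ = ρ·1_{a₆}. Then the diagonal blocks of V(σ₁) = B²A are, in order, 1·1_{a₁}, 0, ρ·1_{a₃}, 0, ρ²·1_{a₅}, 0, and the diagonal blocks of V(σ₂) = AB² are, in order, 0, −ρ²·1_{a₂}, 0, −1·1_{a₄}, 0, −ρ·1_{a₆}. -/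
noncomputable section

open Matrix

variable {a : Fin 6 → ℕ}

/-- The diagonal block of `V` at block position `i` is `c` times the identity. -/
def DiagBlockEq {a : Fin 6 → ℕ} (V : Matrix (BIdx a) (BIdx a) ℂ) (i : Fin 6) (c : ℂ) : Prop :=
  ∀ x y : Fin (a i), V ⟨i, x⟩ ⟨i, y⟩ = if x = y then c else 0

/-!
Block multiplication expresses each diagonal block of `B²A` and `AB²` through the blocks of `A`
and `B`; after the coefficients are reduced with `ρ² + ρ + 1 = 0` and `i² = -1`, every such block
is a scalar matrix or, at one vertex in two, a scalar matrix plus `±(T_k S_k - S_{k+1} T_{k+1})`,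
and the deformed preprojective relation at that vertex makes it scalar as well.
-/

lemma rho_sq_add_rho_add_one : ρ ^ 2 + ρ + 1 = 0 := by
  have h := (Complex.isPrimitiveRoot_exp 3 (by norm_num)).geom_sum_eq_zero (by norm_num)
  simp only [Finset.sum_range_succ, Finset.sum_range_zero, Nat.cast_ofNat] at h
  rw [ρ]
  linear_combination h

namespace Matrix

variable {ι R : Type*} {m : ι → Type*}

def sigmaBlock (M : Matrix (Σ i, m i) (Σ i, m i) R) (i j : ι) : Matrix (m i) (m j) R :=
  of fun x y => M ⟨i, x⟩ ⟨j, y⟩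

lemma sigmaBlock_add [Add R] (M N : Matrix (Σ i, m i) (Σ i, m i) R) (i j : ι) :
    sigmaBlock (M + N) i j = sigmaBlock M i j + sigmaBlock N i j := rfl

lemma sigmaBlock_mul [Fintype ι] [∀ i, Fintype (m i)] [NonUnitalNonAssocSemiring R]
    (M N : Matrix (Σ i, m i) (Σ i, m i) R) (i j : ι) :
    sigmaBlock (M * N) i j = ∑ k, sigmaBlock M i k * sigmaBlock N k j := by
  ext x y
  simp [sigmaBlock, mul_apply, Fintype.sum_sigma, sum_apply]

end Matrix

lemma sigmaBlock_emb_self (i j : Fin 6) (M : Matrix (Fin (a i)) (Fin (a j)) ℂ) :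
    sigmaBlock (emb i j M) i j = M := by
  ext x y
  simp [sigmaBlock, emb]

lemma sigmaBlock_emb_of_ne_left {i j k l : Fin 6} (h : k ≠ i)
    (M : Matrix (Fin (a k)) (Fin (a l)) ℂ) : sigmaBlock (emb k l M) i j = 0 := by
  ext x y
  simp [sigmaBlock, emb, h.symm]

lemma sigmaBlock_emb_of_ne_right {i j k l : Fin 6} (h : l ≠ j)
    (M : Matrix (Fin (a k)) (Fin (a l)) ℂ) : sigmaBlock (emb k l M) i j = 0 := by
  ext x y
  simp [sigmaBlock, emb, h.symm]

lemma diagBlockEq_iff (V : Matrix (BIdx a) (BIdx a) ℂ) (i : Fin 6) (c : ℂ) :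
    DiagBlockEq V i c ↔ sigmaBlock V i i = c • 1 := by
  simp [DiagBlockEq, ← Matrix.ext_iff, sigmaBlock, one_apply]

section Blocks

variable (S₁ : Matrix (Fin (a 0)) (Fin (a 1)) ℂ) (S₂ : Matrix (Fin (a 1)) (Fin (a 2)) ℂ)
    (S₃ : Matrix (Fin (a 2)) (Fin (a 3)) ℂ) (S₄ : Matrix (Fin (a 3)) (Fin (a 4)) ℂ)
    (S₅ : Matrix (Fin (a 4)) (Fin (a 5)) ℂ) (S₆ : Matrix (Fin (a 5)) (Fin (a 0)) ℂ)
    (T₁ : Matrix (Fin (a 1)) (Fin (a 0)) ℂ) (T₂ : Matrix (Fin (a 2)) (Fin (a 1)) ℂ)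
    (T₃ : Matrix (Fin (a 3)) (Fin (a 2)) ℂ) (T₄ : Matrix (Fin (a 4)) (Fin (a 3)) ℂ)
    (T₅ : Matrix (Fin (a 5)) (Fin (a 4)) ℂ) (T₆ : Matrix (Fin (a 0)) (Fin (a 5)) ℂ)

lemma Bmat_sq_mul_Amat_sigmaBlock_self :
    sigmaBlock (Bmat S₂ S₄ S₆ T₁ T₃ T₅ ^ 2 * Amat S₁ S₃ S₅ T₂ T₄ T₆) 0 0 = 1 ∧
    sigmaBlock (Bmat S₂ S₄ S₆ T₁ T₃ T₅ ^ 2 * Amat S₁ S₃ S₅ T₂ T₄ T₆) 1 1 =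
      T₁ * S₁ - S₂ * T₂ - ρ ^ 2 • 1 ∧
    sigmaBlock (Bmat S₂ S₄ S₆ T₁ T₃ T₅ ^ 2 * Amat S₁ S₃ S₅ T₂ T₄ T₆) 2 2 = ρ • 1 ∧
    sigmaBlock (Bmat S₂ S₄ S₆ T₁ T₃ T₅ ^ 2 * Amat S₁ S₃ S₅ T₂ T₄ T₆) 3 3 =
      T₃ * S₃ - S₄ * T₄ - 1 ∧
    sigmaBlock (Bmat S₂ S₄ S₆ T₁ T₃ T₅ ^ 2 * Amat S₁ S₃ S₅ T₂ T₄ T₆) 4 4 = ρ ^ 2 • 1 ∧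
    sigmaBlock (Bmat S₂ S₄ S₆ T₁ T₃ T₅ ^ 2 * Amat S₁ S₃ S₅ T₂ T₄ T₆) 5 5 =
      T₅ * S₅ - S₆ * T₆ - ρ • 1 := by
  have hρ := rho_sq_add_rho_add_one
  have hI := Complex.I_sq
  refine ⟨?_, ?_, ?_, ?_, ?_, ?_⟩ <;>
  · simp only [sq, sigmaBlock_mul, Fin.sum_univ_six]
    simp only [Amat, Bmat, sigmaBlock_add,
      sigmaBlock_emb_self, sigmaBlock_emb_of_ne_left, sigmaBlock_emb_of_ne_right, ne_eq,
      Fin.reduceEq, not_false_eq_true, add_zero, zero_add, Matrix.zero_mul, Matrix.mul_zero,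
      Matrix.add_mul, Matrix.smul_mul, Matrix.mul_smul, Matrix.one_mul,
      Matrix.mul_one, Matrix.mul_neg, smul_smul, smul_zero] <;>
    match_scalars <;> grind

lemma Amat_mul_Bmat_sq_sigmaBlock_self :
    sigmaBlock (Amat S₁ S₃ S₅ T₂ T₄ T₆ * Bmat S₂ S₄ S₆ T₁ T₃ T₅ ^ 2) 0 0 =
      1 - (T₆ * S₆ - S₁ * T₁) ∧
    sigmaBlock (Amat S₁ S₃ S₅ T₂ T₄ T₆ * Bmat S₂ S₄ S₆ T₁ T₃ T₅ ^ 2) 1 1 = -(ρ ^ 2 • 1) ∧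
    sigmaBlock (Amat S₁ S₃ S₅ T₂ T₄ T₆ * Bmat S₂ S₄ S₆ T₁ T₃ T₅ ^ 2) 2 2 =
      ρ • 1 - (T₂ * S₂ - S₃ * T₃) ∧
    sigmaBlock (Amat S₁ S₃ S₅ T₂ T₄ T₆ * Bmat S₂ S₄ S₆ T₁ T₃ T₅ ^ 2) 3 3 = -1 ∧
    sigmaBlock (Amat S₁ S₃ S₅ T₂ T₄ T₆ * Bmat S₂ S₄ S₆ T₁ T₃ T₅ ^ 2) 4 4 =
      ρ ^ 2 • 1 - (T₄ * S₄ - S₅ * T₅) ∧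
    sigmaBlock (Amat S₁ S₃ S₅ T₂ T₄ T₆ * Bmat S₂ S₄ S₆ T₁ T₃ T₅ ^ 2) 5 5 = -(ρ • 1) := by
  have hρ := rho_sq_add_rho_add_one
  have hI := Complex.I_sq
  refine ⟨?_, ?_, ?_, ?_, ?_, ?_⟩ <;>
  · simp only [sq, sigmaBlock_mul, Fin.sum_univ_six]
    simp only [Amat, Bmat, sigmaBlock_add,
      sigmaBlock_emb_self, sigmaBlock_emb_of_ne_left, sigmaBlock_emb_of_ne_right, ne_eq,
      Fin.reduceEq, not_false_eq_true, add_zero, zero_add, Matrix.zero_mul, Matrix.mul_zero,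
      Matrix.mul_add, Matrix.smul_mul, Matrix.mul_smul, Matrix.one_mul,
      Matrix.mul_one, smul_smul, smul_neg, smul_zero] <;>
    match_scalars <;> grind

end Blocks

/-- If the deformed preprojective relations `T₆S₆ − S₁T₁ = 1`, `T₁S₁ − S₂T₂ = ρ²·1`,
`T₂S₂ − S₃T₃ = ρ·1`, `T₃S₃ − S₄T₄ = 1`, `T₄S₄ − S₅T₅ = ρ²·1`, `T₅S₅ − S₆T₆ = ρ·1`
hold, then the diagonal blocks of `V(σ₁) = B²A` are, in order, `1·1, 0, ρ·1, 0, ρ²·1, 0`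
and those of `V(σ₂) = AB²` are, in order, `0, −ρ²·1, 0, −1·1, 0, −ρ·1`. -/
theorem diag_blocks_deformed_preprojective (a : Fin 6 → ℕ)
    (S₁ : Matrix (Fin (a 0)) (Fin (a 1)) ℂ) (S₂ : Matrix (Fin (a 1)) (Fin (a 2)) ℂ)
    (S₃ : Matrix (Fin (a 2)) (Fin (a 3)) ℂ) (S₄ : Matrix (Fin (a 3)) (Fin (a 4)) ℂ)
    (S₅ : Matrix (Fin (a 4)) (Fin (a 5)) ℂ) (S₆ : Matrix (Fin (a 5)) (Fin (a 0)) ℂ)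
    (T₁ : Matrix (Fin (a 1)) (Fin (a 0)) ℂ) (T₂ : Matrix (Fin (a 2)) (Fin (a 1)) ℂ)
    (T₃ : Matrix (Fin (a 3)) (Fin (a 2)) ℂ) (T₄ : Matrix (Fin (a 4)) (Fin (a 3)) ℂ)
    (T₅ : Matrix (Fin (a 5)) (Fin (a 4)) ℂ) (T₆ : Matrix (Fin (a 0)) (Fin (a 5)) ℂ)
    (h₁ : T₆ * S₆ - S₁ * T₁ = 1) (h₂ : T₁ * S₁ - S₂ * T₂ = ρ ^ 2 • 1)
    (h₃ : T₂ * S₂ - S₃ * T₃ = ρ • 1) (h₄ : T₃ * S₃ - S₄ * T₄ = 1)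
    (h₅ : T₄ * S₄ - S₅ * T₅ = ρ ^ 2 • 1) (h₆ : T₅ * S₅ - S₆ * T₆ = ρ • 1) :
    (DiagBlockEq (Bmat S₂ S₄ S₆ T₁ T₃ T₅ ^ 2 * Amat S₁ S₃ S₅ T₂ T₄ T₆) 0 1 ∧
     DiagBlockEq (Bmat S₂ S₄ S₆ T₁ T₃ T₅ ^ 2 * Amat S₁ S₃ S₅ T₂ T₄ T₆) 1 0 ∧
     DiagBlockEq (Bmat S₂ S₄ S₆ T₁ T₃ T₅ ^ 2 * Amat S₁ S₃ S₅ T₂ T₄ T₆) 2 ρ ∧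
     DiagBlockEq (Bmat S₂ S₄ S₆ T₁ T₃ T₅ ^ 2 * Amat S₁ S₃ S₅ T₂ T₄ T₆) 3 0 ∧
     DiagBlockEq (Bmat S₂ S₄ S₆ T₁ T₃ T₅ ^ 2 * Amat S₁ S₃ S₅ T₂ T₄ T₆) 4 (ρ ^ 2) ∧
     DiagBlockEq (Bmat S₂ S₄ S₆ T₁ T₃ T₅ ^ 2 * Amat S₁ S₃ S₅ T₂ T₄ T₆) 5 0) ∧
    (DiagBlockEq (Amat S₁ S₃ S₅ T₂ T₄ T₆ * Bmat S₂ S₄ S₆ T₁ T₃ T₅ ^ 2) 0 0 ∧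
     DiagBlockEq (Amat S₁ S₃ S₅ T₂ T₄ T₆ * Bmat S₂ S₄ S₆ T₁ T₃ T₅ ^ 2) 1 (-ρ ^ 2) ∧
     DiagBlockEq (Amat S₁ S₃ S₅ T₂ T₄ T₆ * Bmat S₂ S₄ S₆ T₁ T₃ T₅ ^ 2) 2 0 ∧
     DiagBlockEq (Amat S₁ S₃ S₅ T₂ T₄ T₆ * Bmat S₂ S₄ S₆ T₁ T₃ T₅ ^ 2) 3 (-1) ∧
     DiagBlockEq (Amat S₁ S₃ S₅ T₂ T₄ T₆ * Bmat S₂ S₄ S₆ T₁ T₃ T₅ ^ 2) 4 0 ∧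
     DiagBlockEq (Amat S₁ S₃ S₅ T₂ T₄ T₆ * Bmat S₂ S₄ S₆ T₁ T₃ T₅ ^ 2) 5 (-ρ)) := by
  obtain ⟨b₀, b₁, b₂, b₃, b₄, b₅⟩ :=
    Bmat_sq_mul_Amat_sigmaBlock_self S₁ S₂ S₃ S₄ S₅ S₆ T₁ T₂ T₃ T₄ T₅ T₆
  obtain ⟨c₀, c₁, c₂, c₃, c₄, c₅⟩ :=
    Amat_mul_Bmat_sq_sigmaBlock_self S₁ S₂ S₃ S₄ S₅ S₆ T₁ T₂ T₃ T₄ T₅ T₆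
  simp only [diagBlockEq_iff, b₀, b₁, b₂, b₃, b₄, b₅, c₀, c₁, c₂, c₃, c₄, c₅,
    h₁, h₂, h₃, h₄, h₅, h₆, sub_self, zero_smul, one_smul, neg_smul, and_self]
end
end

section
/- Let m, k be natural numbers and let A₁, B₁ be m×m complex matrices and A₂, B₂ be k×k complex matrices satisfying A₁² = 1_m, B₁³ = 1_m, A₂² = 1_k, B₂³ = 1_k. Then there is a group homomorphism from the modular group SL₂(ℤ) = ℤ₄ ∗_{ℤ₂} ℤ₆, presented as ⟨s, t | s⁴ = 1, t⁶ = 1, s² = t³⟩ (PresentedGroup), to the group of invertible (m+k)×(m+k) complex matrices, sending s to the block-diagonal matrix diag(A₁, i·A₂) and t to diag(B₁, −B₂), where i ∈ ℂ is the imaginary unit. -/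
/-
Both `diag(A₁, i A₂)²` and `diag(B₁, -B₂)³` equal the central involution `diag(1, -1)`,
so `s ↦ diag(A₁, i A₂)`, `t ↦ diag(B₁, -B₂)` respects `s² = t³`, and `s⁴ = t⁶ = diag(1, -1)² = 1`.
-/

open Matrix

/-- Relations of the modular group `SL₂(ℤ) = ⟨s, t | s⁴ = 1, t⁶ = 1, s² = t³⟩`, with
`s` encoded as `true` and `t` as `false`. -/
def sl2Rels : Set (FreeGroup Bool) :=
  {FreeGroup.of true ^ 4, FreeGroup.of false ^ 6,
    FreeGroup.of true ^ 2 * (FreeGroup.of false ^ 3)⁻¹}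

theorem exists_sl2Rels_hom_units {M : Type*} [Monoid M] (S T : M) (hS : S ^ 4 = 1)
    (hST : S ^ 2 = T ^ 3) :
    ∃ φ : PresentedGroup sl2Rels →* Mˣ,
      (φ (PresentedGroup.of true) : M) = S ∧ (φ (PresentedGroup.of false) : M) = T := by
  have hT : T ^ 6 = 1 := by
    rw [show 6 = 3 * 2 from rfl, pow_mul, ← hST, ← pow_mul]
    exact hS
  let uS := Units.ofPowEqOne S 4 hS four_ne_zero
  let uT := Units.ofPowEqOne T 6 hT (by norm_num)
  let f : Bool → Mˣ := fun b => if b then uS else uT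
  have hrel : ∀ r ∈ sl2Rels, FreeGroup.lift f r = 1 := by
    rintro r (rfl | rfl | rfl)
    · simp [f, uS]
    · simp [f, uT]
    · simpa [f, uS, uT, mul_inv_eq_one, Units.ext_iff] using hST
  exact ⟨PresentedGroup.toGroup hrel, by simp [f, uS], by simp [f, uT]⟩

/-- Given `A₁, B₁ ∈ M_m(ℂ)` and `A₂, B₂ ∈ M_k(ℂ)` with `A₁² = 1`, `B₁³ = 1`,
`A₂² = 1`, `B₂³ = 1`, there is a group homomorphism from
`SL₂(ℤ) = ⟨s, t | s⁴ = 1, t⁶ = 1, s² = t³⟩` to the invertible `(m+k)×(m+k)` complex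
matrices sending `s ↦ diag(A₁, i·A₂)` and `t ↦ diag(B₁, −B₂)`. -/
theorem sl2z_representation_blockdiag (m k : ℕ)
    (A₁ B₁ : Matrix (Fin m) (Fin m) ℂ) (A₂ B₂ : Matrix (Fin k) (Fin k) ℂ)
    (hA₁ : A₁ ^ 2 = 1) (hB₁ : B₁ ^ 3 = 1) (hA₂ : A₂ ^ 2 = 1) (hB₂ : B₂ ^ 3 = 1) :
    ∃ φ : PresentedGroup sl2Rels →* (Matrix (Fin m ⊕ Fin k) (Fin m ⊕ Fin k) ℂ)ˣ,
      (φ (PresentedGroup.of true) : Matrix (Fin m ⊕ Fin k) (Fin m ⊕ Fin k) ℂ)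
          = fromBlocks A₁ 0 0 (Complex.I • A₂) ∧
      (φ (PresentedGroup.of false) : Matrix (Fin m ⊕ Fin k) (Fin m ⊕ Fin k) ℂ)
          = fromBlocks B₁ 0 0 (-B₂) := by
  have hS2 : fromBlocks A₁ 0 0 (Complex.I • A₂) ^ 2 = fromBlocks 1 0 0 (-1) := by
    rw [fromBlocks_diagonal_pow, smul_pow, hA₁, hA₂, Complex.I_sq, neg_one_smul]
  have hT3 : fromBlocks B₁ 0 0 (-B₂) ^ 3 = fromBlocks 1 0 0 (-1) := by
    rw [fromBlocks_diagonal_pow, Odd.neg_pow (by decide), hB₁, hB₂]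
  have hS4 : fromBlocks A₁ 0 0 (Complex.I • A₂) ^ 4 = 1 := by
    rw [show 4 = 2 * 2 from rfl, pow_mul, hS2, fromBlocks_diagonal_pow, neg_one_sq, one_pow,
      fromBlocks_one]
  exact exists_sl2Rels_hom_units _ _ hS4 (hS2.trans hT3.symm)
end

section
/- Let T be a unital associative ℂ-algebra, I ⊆ T a nilpotent two-sided ideal, and π : T → T/I the quotient map. Suppose u, v ∈ T/I satisfy u² = 1 and v³ = 1. Then there exist û, v̂ ∈ T with π(û) = u, π(v̂) = v, û² = 1 and v̂³ = 1. (This expresses the formal smoothness of the group algebra ℂ[PSL₂(ℤ)] = ℂℤ₂ ∗ ℂℤ₃ of the projective modular group.) -/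
open Polynomial Lagrange

theorem NilpotentKernel.isNilpotent_of_mem_ker {T R : Type*} [Ring T] [Ring R] {π : T →+* R}
    (h : NilpotentKernel π) : ∀ x ∈ RingHom.ker π, IsNilpotent x := by
  obtain ⟨k, -, hk⟩ := h
  refine fun x hx ↦ ⟨k, ?_⟩
  simpa using hk (List.replicate k x) (by simp) fun y hy ↦ List.eq_of_mem_replicate hy ▸ hx

namespace CompleteOrthogonalIdempotents

variable {K A I : Type*} [CommSemiring K] [Semiring A] [Algebra K A] [Fintype I] [DecidableEq I]
  {e : I → A}

def piAlgHom (he : CompleteOrthogonalIdempotents e) : (I → K) →ₐ[K] A where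
  toFun c := ∑ i, c i • e i
  map_one' := by simp [he.complete]
  map_mul' c d := by
    simp only [Finset.sum_mul_sum, smul_mul_smul_comm, he.toOrthogonalIdempotents.mul_eq,
      smul_ite, smul_zero, Finset.sum_ite_eq, Finset.mem_univ, if_true, Pi.mul_apply]
  map_zero' := by simp
  map_add' c d := by simp [add_smul, Finset.sum_add_distrib]
  commutes' k := by simp [Algebra.algebraMap_eq_smul_one, ← he.complete, Finset.smul_sum]

theorem piAlgHom_apply (he : CompleteOrthogonalIdempotents e) (c : I → K) :
    he.piAlgHom c = ∑ i, c i • e i := rfl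

end CompleteOrthogonalIdempotents

section Nodal

variable {K : Type*} [Field K] {s : Finset K}

theorem nodal_id_dvd_of_eval_eq_zero {q : K[X]} (hq : ∀ a ∈ s, q.eval a = 0) :
    nodal s id ∣ q :=
  Finset.prod_dvd_of_coprime (fun _ _ _ _ h ↦ pairwise_coprime_X_sub_C Function.injective_id h)
    fun a ha ↦ dvd_iff_isRoot.mpr (hq a ha)

variable {B : Type*} [Ring B] [Algebra K B] {x : B}

theorem aeval_eq_zero_of_aeval_nodal_eq_zero (hx : aeval x (nodal s id) = 0) {q : K[X]}
    (hq : ∀ a ∈ s, q.eval a = 0) : aeval x q = 0 := by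
  obtain ⟨r, rfl⟩ := nodal_id_dvd_of_eval_eq_zero hq
  rw [map_mul, hx, zero_mul]

variable [DecidableEq K]

theorem completeOrthogonalIdempotents_aeval_basis (hx : aeval x (nodal s id) = 0) :
    CompleteOrthogonalIdempotents fun a : s ↦ aeval x (Lagrange.basis s id a) := by
  have inj : Set.InjOn id (s : Set K) := Set.injOn_id _
  have eval_basis (a b : K) (ha : a ∈ s) (hb : b ∈ s) :
      (Lagrange.basis s id a).eval b = if a = b then 1 else 0 := by
    split_ifs with h
    · subst h; exact eval_basis_self inj ha
    · exact eval_basis_of_ne (v := id) h hb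
  -- each identity holds modulo `nodal s id`, since it holds at every node
  refine ⟨⟨fun a ↦ ?_, fun a b hab ↦ ?_⟩, ?_⟩
  · rw [IsIdempotentElem, ← map_mul, ← sub_eq_zero, ← map_sub]
    refine aeval_eq_zero_of_aeval_nodal_eq_zero hx fun b hb ↦ ?_
    simp only [eval_sub, eval_mul, eval_basis a b a.2 hb]
    split_ifs <;> simp
  · show _ * _ = 0
    rw [← map_mul]
    refine aeval_eq_zero_of_aeval_nodal_eq_zero hx fun c hc ↦ ?_
    have : (a : K) ≠ b := Subtype.coe_injective.ne hab
    simp only [eval_mul, eval_basis a c a.2 hc, eval_basis b c b.2 hc]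
    split_ifs <;> simp_all
  · have h := aeval_eq_zero_of_aeval_nodal_eq_zero hx (q := ∑ a ∈ s, Lagrange.basis s id a - 1)
      fun b hb ↦ by rw [sum_basis inj ⟨b, hb⟩, sub_self, eval_zero]
    rw [Finset.sum_coe_sort s fun a ↦ aeval x (Lagrange.basis s id a), ← sub_eq_zero]
    simpa using h

theorem sum_smul_aeval_basis (hx : aeval x (nodal s id) = 0) :
    ∑ a : s, (a : K) • aeval x (Lagrange.basis s id a) = x := by
  have inj : Set.InjOn id (s : Set K) := Set.injOn_id _
  have h := aeval_eq_zero_of_aeval_nodal_eq_zero hx (q := interpolate s id id - X) fun b hb ↦ by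
    rw [eval_sub, eval_X, sub_eq_zero]; exact eval_interpolate_at_node id inj hb
  rw [Finset.sum_coe_sort s fun a ↦ a • aeval x (Lagrange.basis s id a), ← sub_eq_zero]
  simpa [interpolate_apply, Algebra.smul_def] using h

end Nodal

section Lift

variable {K A B : Type*} [Field K] [Ring A] [Algebra K A] [Ring B] [Algebra K B]

theorem exists_lift_of_aeval_nodal_eq_zero (π : A →ₐ[K] B) (hπ : Function.Surjective π)
    (hker : ∀ y ∈ RingHom.ker (π : A →+* B), IsNilpotent y) {s : Finset K} {x : B}
    (hx : aeval x (nodal s id) = 0) : ∃ y, π y = x ∧ aeval y (nodal s id) = 0 := by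
  classical
  obtain ⟨E, hE, hπE⟩ := (completeOrthogonalIdempotents_aeval_basis hx).lift_of_isNilpotent_ker
    (π : A →+* B) hker fun _ ↦ RingHom.mem_range.mpr (hπ _)
  refine ⟨hE.piAlgHom (fun a : s ↦ (a : K)), ?_, ?_⟩
  · rw [CompleteOrthogonalIdempotents.piAlgHom_apply, map_sum]
    simp_rw [map_smul]
    convert sum_smul_aeval_basis hx using 3 with a
    exact congr_fun hπE a
  · have h : aeval (fun a : s ↦ (a : K)) (nodal s id) = 0 :=
      funext fun a ↦ by simpa [aeval_pi] using eval_nodal_at_node (v := id) a.2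
    rw [aeval_algHom_apply, h, map_zero]

theorem exists_lift_of_pow_eq_one (π : A →ₐ[K] B) (hπ : Function.Surjective π)
    (hker : ∀ y ∈ RingHom.ker (π : A →+* B), IsNilpotent y) {n : ℕ} (hn : 0 < n) {ζ : K}
    (hζ : IsPrimitiveRoot ζ n) {x : B} (hx : x ^ n = 1) : ∃ y, π y = x ∧ y ^ n = 1 := by
  have hnodal : nodal (nthRootsFinset n (1 : K)) id = X ^ n - 1 :=
    (X_pow_sub_one_eq_prod hn hζ).symm
  obtain ⟨y, hy, hy'⟩ := exists_lift_of_aeval_nodal_eq_zero π hπ hker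
    (s := nthRootsFinset n (1 : K)) (x := x) (by simp [hnodal, hx])
  exact ⟨y, hy, by simpa [hnodal, sub_eq_zero] using hy'⟩

end Lift

/-- Formal smoothness of `ℂ[PSL₂(ℤ)] = ℂℤ₂ ∗ ℂℤ₃`: given a `ℂ`-algebra `T`, a
nilpotent two-sided ideal `I ⊆ T` with quotient map `π : T → T/I` (encoded as a
surjective algebra map with nilpotent kernel), and `u, v ∈ T/I` with `u² = 1`,
`v³ = 1`, there are lifts `uhat, vhat ∈ T` satisfying the same relations. -/
theorem psl2z_group_algebra_formally_smooth
    (T R : Type) [Ring T] [Algebra ℂ T] [Ring R] [Algebra ℂ R]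
    (π : T →ₐ[ℂ] R) (hπ : Function.Surjective π) (hnil : NilpotentKernel (π : T →+* R))
    (u v : R) (hu : u ^ 2 = 1) (hv : v ^ 3 = 1) :
    ∃ uhat vhat : T, π uhat = u ∧ π vhat = v ∧ uhat ^ 2 = 1 ∧ vhat ^ 3 = 1 := by
  have hker := hnil.isNilpotent_of_mem_ker
  obtain ⟨uhat, hπu, huhat⟩ := exists_lift_of_pow_eq_one π hπ hker two_pos
    (Complex.isPrimitiveRoot_exp 2 two_ne_zero) hu
  obtain ⟨vhat, hπv, hvhat⟩ := exists_lift_of_pow_eq_one π hπ hker three_pos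
    (Complex.isPrimitiveRoot_exp 3 three_ne_zero) hv
  exact ⟨uhat, vhat, hπu, hπv, huhat, hvhat⟩
end
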